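/- arXiv:2502.18053 — 3 statements merged into one kernel-verified Lean document; each statement's English description precedes it below -/
import Mathlib

section
/- Let $k$ be a field and let $g_1,\dots,g_d \in X\cdot k[[X]]$ be pairwise distinct power series with zero constant term. If $F(X,Y) \in k[[X,Y]]$ satisfies $F(X, g_b(X)) = 0$ for all $b = 1,\dots,d$, then $F(X,Y)$ is divisible by $\prod_{b=1}^d (Y - g_b(X))$ in $k[[X,Y]]$. -/
/-- Substitution `F(X, g(X))` for `F ∈ k[[X,Y]] = (k[[X]])[[Y]]` and `g ∈ k[[X]]`
with zero constant term. -/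
noncomputable def PSEvalY {k : Type*} [CommRing k] (F : PowerSeries (PowerSeries k))
    (g : PowerSeries k) : PowerSeries k :=
  PowerSeries.mk fun m => ∑ n ∈ Finset.range (m + 1),
    PowerSeries.coeff (R := k) m (PowerSeries.coeff (R := PowerSeries k) n F * g ^ n)

/-!
Since `g` has zero constant term, `PSEvalY F g` agrees modulo `X ^ N` with the partial sum
`∑_{n < N} F_n g^n`, so evaluation at `g` is additive and turns multiplication by `Y` into
multiplication by `g`. With `R_j := PSEvalY (∑_i F_{i+j} Y^i) g` this gives
`R_j = F_j + g R_{j+1}`, i.e. `F - R_0 = (Y - g) ∑_j R_{j+1} Y^j`; so `Y - g` divides `F`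
once `F(X, g) = 0`. Since `k[[X]]` is a domain and `g_b - g_0 ≠ 0`, the quotient vanishes at the
remaining `g_b`, and induction on `d` finishes the proof.
-/

open PowerSeries

namespace PowerSeries

theorem eq_of_forall_X_pow_dvd_sub {R : Type*} [Ring R] {a b : R⟦X⟧}
    (h : ∀ N, (X : R⟦X⟧) ^ N ∣ a - b) : a = b := by
  ext m
  simpa [sub_eq_zero] using X_pow_dvd_iff.mp (h (m + 1)) m (Nat.lt_succ_self m)

end PowerSeries

section PSEvalY

variable {k : Type*} [CommRing k]

noncomputable def partialEvalY (F : PowerSeries (PowerSeries k)) (g : PowerSeries k) (N : ℕ) :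
    PowerSeries k :=
  ∑ n ∈ Finset.range N, coeff n F * g ^ n

theorem X_pow_dvd_PSEvalY_sub_partialEvalY (F : PowerSeries (PowerSeries k))
    {g : PowerSeries k} (hg : constantCoeff g = 0) (N : ℕ) :
    (X : PowerSeries k) ^ N ∣ PSEvalY F g - partialEvalY F g N := by
  refine X_pow_dvd_iff.mpr fun m hm => ?_
  rw [map_sub, sub_eq_zero, PSEvalY, coeff_mk, partialEvalY, map_sum]
  refine Finset.sum_subset (Finset.range_subset_range.mpr hm) fun n _ hn => ?_
  have hX : (X : PowerSeries k) ^ n ∣ coeff n F * g ^ n :=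
    (pow_dvd_pow_of_dvd (X_dvd_iff.mpr hg) n).mul_left _
  exact X_pow_dvd_iff.mp hX m (by simpa using hn)

theorem PSEvalY_add (F G : PowerSeries (PowerSeries k)) (g : PowerSeries k) :
    PSEvalY (F + G) g = PSEvalY F g + PSEvalY G g := by
  ext m
  simp [PSEvalY, add_mul, Finset.sum_add_distrib]

theorem PSEvalY_sub (F G : PowerSeries (PowerSeries k)) (g : PowerSeries k) :
    PSEvalY (F - G) g = PSEvalY F g - PSEvalY G g := by
  ext m
  simp [PSEvalY, sub_mul, Finset.sum_sub_distrib]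

theorem PSEvalY_C_mul (c : PowerSeries k) (F : PowerSeries (PowerSeries k))
    {g : PowerSeries k} (hg : constantCoeff g = 0) :
    PSEvalY (C c * F) g = c * PSEvalY F g := by
  refine eq_of_forall_X_pow_dvd_sub fun N => ?_
  have hpartial : partialEvalY (C c * F) g N = c * partialEvalY F g N := by
    simp only [partialEvalY, Finset.mul_sum, coeff_C_mul, mul_assoc]
  have hsplit : PSEvalY (C c * F) g - c * PSEvalY F g =
      (PSEvalY (C c * F) g - partialEvalY (C c * F) g N) -
        c * (PSEvalY F g - partialEvalY F g N) := by
    rw [hpartial]; ring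
  rw [hsplit]
  exact dvd_sub (X_pow_dvd_PSEvalY_sub_partialEvalY _ hg N)
    ((X_pow_dvd_PSEvalY_sub_partialEvalY F hg N).mul_left c)

theorem PSEvalY_X_mul (F : PowerSeries (PowerSeries k)) {g : PowerSeries k}
    (hg : constantCoeff g = 0) :
    PSEvalY (X * F) g = g * PSEvalY F g := by
  refine eq_of_forall_X_pow_dvd_sub fun N => ?_
  have hpartial : partialEvalY (X * F) g (N + 1) = g * partialEvalY F g N := by
    simp only [partialEvalY, Finset.sum_range_succ', coeff_zero_X_mul, zero_mul, add_zero,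
      coeff_succ_X_mul, Finset.mul_sum, pow_succ]
    exact Finset.sum_congr rfl fun n _ => by ring
  have hsplit : PSEvalY (X * F) g - g * PSEvalY F g =
      (PSEvalY (X * F) g - partialEvalY (X * F) g (N + 1)) -
        g * (PSEvalY F g - partialEvalY F g N) := by
    rw [hpartial]; ring
  rw [hsplit]
  exact dvd_sub ((pow_dvd_pow _ N.le_succ).trans (X_pow_dvd_PSEvalY_sub_partialEvalY _ hg _))
    ((X_pow_dvd_PSEvalY_sub_partialEvalY F hg N).mul_left g)

theorem PSEvalY_one {g : PowerSeries k} (hg : constantCoeff g = 0) :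
    PSEvalY (1 : PowerSeries (PowerSeries k)) g = 1 := by
  refine eq_of_forall_X_pow_dvd_sub fun N => ?_
  have hpartial : partialEvalY (1 : PowerSeries (PowerSeries k)) g (N + 1) = 1 := by
    simp [partialEvalY, coeff_one]
  simpa [hpartial] using
    (pow_dvd_pow _ N.le_succ).trans (X_pow_dvd_PSEvalY_sub_partialEvalY 1 hg (N + 1))

theorem PSEvalY_C (c : PowerSeries k) {g : PowerSeries k} (hg : constantCoeff g = 0) :
    PSEvalY (C c) g = c := by
  simpa [PSEvalY_one hg] using PSEvalY_C_mul c 1 hg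

theorem PSEvalY_X_sub_C_mul (c : PowerSeries k) (F : PowerSeries (PowerSeries k))
    {g : PowerSeries k} (hg : constantCoeff g = 0) :
    PSEvalY ((X - C c) * F) g = (g - c) * PSEvalY F g := by
  rw [sub_mul, PSEvalY_sub, PSEvalY_X_mul _ hg, PSEvalY_C_mul _ _ hg, sub_mul]

theorem PSEvalY_shift_eq (F : PowerSeries (PowerSeries k)) {g : PowerSeries k}
    (hg : constantCoeff g = 0) (j : ℕ) :
    PSEvalY (mk fun i ↦ coeff (i + j) F) g =
      coeff j F + g * PSEvalY (mk fun i ↦ coeff (i + (j + 1)) F) g := by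
  have hsplit : (mk fun i ↦ coeff (i + j) F) =
      X * (mk fun i ↦ coeff (i + (j + 1)) F) + C (coeff j F) := by
    convert eq_X_mul_shift_add_const (mk fun i ↦ coeff (i + j) F) using 4 <;>
      simp [add_right_comm, add_assoc]
  rw [hsplit, PSEvalY_add, PSEvalY_X_mul _ hg, PSEvalY_C _ hg, add_comm]

noncomputable def divXSubC (F : PowerSeries (PowerSeries k)) (g : PowerSeries k) :
    PowerSeries (PowerSeries k) :=
  mk fun j ↦ PSEvalY (mk fun i ↦ coeff (i + (j + 1)) F) g

theorem X_sub_C_mul_divXSubC (F : PowerSeries (PowerSeries k)) {g : PowerSeries k}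
    (hg : constantCoeff g = 0) :
    (X - C g) * divXSubC F g = F - C (PSEvalY F g) := by
  refine ext fun n => ?_
  cases n with
  | zero =>
    have h := PSEvalY_shift_eq F hg 0
    simp only [add_zero, show (mk fun i ↦ coeff i F) = F from ext fun _ => coeff_mk _ _] at h
    simp only [divXSubC, sub_mul, map_sub, coeff_C_mul, coeff_mk, coeff_C, coeff_zero_X_mul,
      if_true]
    linear_combination h
  | succ n =>
    simp only [divXSubC, sub_mul, map_sub, coeff_C_mul, coeff_mk, coeff_C, coeff_succ_X_mul,
      n.succ_ne_zero, if_false]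
    linear_combination PSEvalY_shift_eq F hg (n + 1)

theorem X_sub_C_dvd_of_PSEvalY_eq_zero {F : PowerSeries (PowerSeries k)} {g : PowerSeries k}
    (hg : constantCoeff g = 0) (hF : PSEvalY F g = 0) : X - C g ∣ F :=
  ⟨divXSubC F g, by rw [X_sub_C_mul_divXSubC F hg, hF, map_zero, sub_zero]⟩

theorem prod_X_sub_C_dvd_of_PSEvalY_eq_zero [IsDomain k] {d : ℕ} {g : Fin d → PowerSeries k}
    (hg0 : ∀ b, constantCoeff (g b) = 0) (hginj : Function.Injective g)
    {F : PowerSeries (PowerSeries k)} (hF : ∀ b, PSEvalY F (g b) = 0) :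
    ∏ b, (X - C (g b)) ∣ F := by
  induction d generalizing F with
  | zero => simp
  | succ d ih =>
    obtain ⟨G, rfl⟩ := X_sub_C_dvd_of_PSEvalY_eq_zero (hg0 0) (hF 0)
    have hG : ∀ b : Fin d, PSEvalY G (g b.succ) = 0 := fun b => by
      have hne : g b.succ - g 0 ≠ 0 := sub_ne_zero.mpr (hginj.ne (Fin.succ_ne_zero b))
      simpa [PSEvalY_X_sub_C_mul _ _ (hg0 b.succ), hne] using hF b.succ
    rw [Fin.prod_univ_succ]
    exact mul_dvd_mul_left _ (ih (fun b => hg0 b.succ) (hginj.comp (Fin.succ_injective d)) hG)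

end PSEvalY

/-- If `F(X,Y) ∈ k[[X,Y]]` satisfies `F(X, g_b(X)) = 0` for pairwise distinct
`g_1, …, g_d ∈ X·k[[X]]`, then `∏ b, (Y - g_b(X))` divides `F` in `k[[X,Y]]`. -/
theorem stmt0 {k : Type*} [Field k] (d : ℕ) (g : Fin d → PowerSeries k)
    (hg0 : ∀ b, PowerSeries.constantCoeff (R := k) (g b) = 0)
    (hginj : Function.Injective g)
    (F : PowerSeries (PowerSeries k)) (hF : ∀ b, PSEvalY F (g b) = 0) :
    ∃ G : PowerSeries (PowerSeries k),
      F = (∏ b : Fin d, (PowerSeries.X - PowerSeries.C (R := PowerSeries k) (g b))) * G :=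
  prod_X_sub_C_dvd_of_PSEvalY_eq_zero hg0 hginj hF
end

section
/- Let $F$ be a finite extension of $\mathbf{Q}_p$ with ring of integers $o_F$, residue field of cardinality $q$, uniformizer $\pi$, and let $\operatorname{LT}$ be the Lubin--Tate formal group with $[\pi](X) = \pi X + X^q$. Define $\psi$ on $o_F[[X]]$ by $\phi(\psi(f)) = \frac{1}{\pi}\operatorname{Tr}_{o_F[[X]]/\phi(o_F[[X]])}(f)$ where $\phi(f)(X) = f([\pi](X))$. Then $\psi(1) = q/\pi$, $\psi(X^i) = 0$ for $1 \leq i \leq q-2$, $\psi(X^{q-1}) = 1-q$, and $\psi(X^i) = X\cdot\psi(X^{i-q}) - \pi\cdot\psi(X^{i-q+1})$ for $i \geq q$. -/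
open PowerSeries

/-- Composition `f(g(X))` of formal power series (valid when `g` has zero constant term):
the coefficient of `X^m` in `∑ n, f_n g(X)^n` only involves `n ≤ m`. -/
noncomputable def PSComp {R : Type*} [CommRing R] (f g : PowerSeries R) : PowerSeries R :=
  PowerSeries.mk fun m => ∑ n ∈ Finset.range (m + 1),
    PowerSeries.coeff m (PowerSeries.C (PowerSeries.coeff n f) * g ^ n)

/-! Write `u = πX + X^q` and `φ f = f(u)`. Modulo `π` we have `u ≡ X^q`, and
`f = ∑ X^i h_i(X^q)` just distributes the coefficients of `f` among the `h_i`; so if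
`∑ X^i φ(h_i) = 0` then `π` divides every `h_i`, and dividing by `π` and iterating shows that
every coefficient of every `h_i` lies in `⋂ πᵗ o_F = 0`. Hence the decomposition in the basis
`1, X, …, X^(q-1)` is unique, and it is computed for `X^t` (`t < q`) directly and for
`X^(s+q) = u X^s - π X^(s+1)` recursively. Then `π ψ(X^j)` is the sum of the diagonal coordinates
of `X^(i+j)`, which gives the four formulas. -/

section

open Finset

variable {R : Type*} [CommRing R]

theorem PSComp_eq_subst {g : R⟦X⟧} (hg : constantCoeff g = 0) (f : R⟦X⟧) :
    PSComp f g = f.subst g := by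
  ext m
  rw [coeff_subst' (HasSubst.of_constantCoeff_zero' hg),
    finsum_eq_sum_of_support_subset (s := range (m + 1))]
  · simp only [PSComp, coeff_mk, coeff_C_mul, smul_eq_mul]
  · intro n hn
    contrapose! hn
    have : m < n := by simpa using hn
    rw [Function.mem_support, not_not, coeff_of_lt_order m ((Nat.cast_lt.mpr this).trans_le
      (le_order_pow_of_constantCoeff_eq_zero n hg)), smul_zero]

theorem IsHausdorff.eq_zero_of_forall_pow_dvd {π : R} [IsHausdorff (Ideal.span {π}) R] {r : R}
    (h : ∀ t : ℕ, π ^ t ∣ r) : r = 0 :=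
  IsHausdorff.haus ‹_› r fun t => by
    rw [SModEq.zero, smul_eq_mul, Ideal.mul_top, Ideal.span_singleton_pow, Ideal.mem_span_singleton]
    exact h t

namespace PowerSeries

theorem coeff_X_pow_mul_subst_X_pow {S : Type*} [CommRing S] {q i j : ℕ} (hi : i < q)
    (hj : j < q) (h : S⟦X⟧) (n : ℕ) :
    coeff (i + q * n) (X ^ j * h.subst (X ^ q : S⟦X⟧)) = if j = i then coeff n h else 0 := by
  have hq : q ≠ 0 := by omega
  rw [coeff_X_pow_mul', coeff_subst_X_pow hq]
  by_cases hji : j = i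
  · subst hji
    simp [hq]
  · have hndvd : ¬ (j ≤ i + q * n ∧ q ∣ i + q * n - j) := by
      rintro ⟨hle, c, hc⟩
      have hmod : (i + q * n) % q = (j + q * c) % q := by
        generalize q * n = a, q * c = b at hle hc
        congr 1
        omega
      rw [Nat.add_mul_mod_self_left, Nat.add_mul_mod_self_left, Nat.mod_eq_of_lt hi,
        Nat.mod_eq_of_lt hj] at hmod
      exact hji hmod.symm
    grind

theorem eq_zero_of_sum_X_pow_mul_subst_X_pow_eq_zero {S : Type*} [CommRing S] {q : ℕ}
    {h : Fin q → S⟦X⟧}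
    (hsum : ∑ i : Fin q, X ^ (i : ℕ) * (h i).subst (X ^ q : S⟦X⟧) = 0) : h = 0 := by
  funext i
  ext n
  have := congrArg (coeff ((i : ℕ) + q * n)) hsum
  simpa [map_sum, coeff_X_pow_mul_subst_X_pow i.2 (Fin.is_lt _), Fin.val_inj] using this

theorem C_dvd_of_map_mk_span_eq_zero {π : R} {f : R⟦X⟧}
    (hf : f.map (Ideal.Quotient.mk (Ideal.span {π})) = 0) : C π ∣ f := by
  have hdvd (n : ℕ) : π ∣ coeff n f := by
    rw [← Ideal.mem_span_singleton, ← Ideal.Quotient.eq_zero_iff_mem, ← coeff_map, hf,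
      map_zero]
  choose c hc using hdvd
  exact ⟨mk c, by ext n; rw [coeff_C_mul, coeff_mk, ← hc]⟩

end PowerSeries

namespace LubinTate

noncomputable def piSeries (π : R) (q : ℕ) : R⟦X⟧ := C π * X + X ^ q

theorem constantCoeff_piSeries (π : R) {q : ℕ} (hq : q ≠ 0) :
    constantCoeff (piSeries π q) = 0 := by
  simp [piSeries, hq]

theorem hasSubst_piSeries (π : R) {q : ℕ} (hq : q ≠ 0) : HasSubst (piSeries π q) :=
  HasSubst.of_constantCoeff_zero' (constantCoeff_piSeries π hq)

theorem map_piSeries_mk_span (π : R) (q : ℕ) :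
    (piSeries π q).map (Ideal.Quotient.mk (Ideal.span {π})) = X ^ q := by
  simp [piSeries, Ideal.Quotient.eq_zero_iff_mem.mpr (Ideal.mem_span_singleton_self π)]

noncomputable def phiSum (π : R) (q : ℕ) (h : Fin q → R⟦X⟧) : R⟦X⟧ :=
  ∑ i : Fin q, X ^ (i : ℕ) * (h i).subst (piSeries π q)

section phiSum

variable {π : R} {q : ℕ}

theorem phiSum_sub (hq : q ≠ 0) (g h : Fin q → R⟦X⟧) :
    phiSum π q (g - h) = phiSum π q g - phiSum π q h := by
  simp only [phiSum, Pi.sub_apply, subst_sub (hasSubst_piSeries π hq), mul_sub, sum_sub_distrib]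

theorem phiSum_smul (hq : q ≠ 0) (a : R⟦X⟧) (h : Fin q → R⟦X⟧) :
    phiSum π q (a • h) = a.subst (piSeries π q) * phiSum π q h := by
  simp only [phiSum, Pi.smul_apply, smul_eq_mul, subst_mul (hasSubst_piSeries π hq), mul_sum]
  exact sum_congr rfl fun _ _ => by ring

theorem phiSum_single (hq : q ≠ 0) (t : Fin q) (a : R⟦X⟧) :
    phiSum π q (Pi.single t a) = X ^ (t : ℕ) * a.subst (piSeries π q) := by
  rw [phiSum, sum_eq_single t]
  · simp
  · intro i _ hi
    simp [hi, ← coe_substAlgHom (hasSubst_piSeries π hq)]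
  · simp

theorem map_mk_span_phiSum (hq : q ≠ 0) (h : Fin q → R⟦X⟧) :
    (phiSum π q h).map (Ideal.Quotient.mk (Ideal.span {π})) =
      ∑ i : Fin q, X ^ (i : ℕ) *
        ((h i).map (Ideal.Quotient.mk (Ideal.span {π}))).subst
          (X ^ q : (R ⧸ Ideal.span {π})⟦X⟧) := by
  simp only [phiSum, map_sum, map_mul, map_pow, map_X]
  refine sum_congr rfl fun i _ => ?_
  rw [← map_piSeries_mk_span π q]
  exact congrArg _ (map_subst (hasSubst_piSeries π hq) _)

variable [IsDomain R]

theorem C_pow_dvd_of_phiSum_eq_zero (hπ : π ≠ 0) (hq : q ≠ 0) (t : ℕ)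
    {h : Fin q → R⟦X⟧} (hh : phiSum π q h = 0) (i : Fin q) : C π ^ t ∣ h i := by
  induction t generalizing h with
  | zero => simp
  | succ t ih =>
    have hdvd (i : Fin q) : C π ∣ h i := by
      refine C_dvd_of_map_mk_span_eq_zero (congrFun
        (eq_zero_of_sum_X_pow_mul_subst_X_pow_eq_zero (h := fun i => (h i).map _) ?_) i)
      rw [← map_mk_span_phiSum hq, hh, map_zero]
    choose g hg using hdvd
    have hgh : h = C π • g := funext hg
    have hg0 : phiSum π q g = 0 := by
      rw [hgh, phiSum_smul hq, subst_C, ← C_apply] at hh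
      exact (mul_eq_zero.mp hh).resolve_left ((map_ne_zero_iff _ C_injective).mpr hπ)
    rw [hg i, pow_succ']
    exact mul_dvd_mul_left _ (ih hg0)

theorem phiSum_injective (hπ : π ≠ 0) [IsHausdorff (Ideal.span {π}) R] (hq : q ≠ 0) :
    Function.Injective (phiSum π q) := by
  intro g h hgh
  have hsub : phiSum π q (g - h) = 0 := by rw [phiSum_sub hq, hgh, sub_self]
  funext i
  ext n
  rw [← sub_eq_zero, ← map_sub]
  refine IsHausdorff.eq_zero_of_forall_pow_dvd (π := π) fun t => ?_
  obtain ⟨c, hc⟩ := C_pow_dvd_of_phiSum_eq_zero hπ hq t hsub i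
  rw [← Pi.sub_apply, hc, ← map_pow, coeff_C_mul]
  exact dvd_mul_right _ _

end phiSum

section Decomposition

variable {π : R} {q : ℕ} {D : R⟦X⟧ → Fin q → R⟦X⟧}

theorem ne_zero_of_decomp [Nontrivial R] (hD : ∀ f, f = phiSum π q (D f)) : q ≠ 0 := by
  rintro rfl
  simpa [phiSum] using hD 1

variable (hinj : Function.Injective (phiSum π q)) (hD : ∀ f, f = phiSum π q (D f))
include hinj hD

theorem decomp_X_pow_of_lt {t : ℕ} (ht : t < q) : D (X ^ t) = Pi.single ⟨t, ht⟩ 1 := by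
  refine hinj ((hD _).symm.trans ?_)
  rw [phiSum_single (by omega), ← coe_substAlgHom (hasSubst_piSeries π (by omega)), map_one,
    mul_one]

theorem decomp_X_pow_add (hq : q ≠ 0) (s : ℕ) :
    D (X ^ (s + q)) = (X : R⟦X⟧) • D (X ^ s) - C π • D (X ^ (s + 1)) := by
  refine hinj ((hD _).symm.trans ?_)
  rw [phiSum_sub hq, phiSum_smul hq, phiSum_smul hq, subst_X (hasSubst_piSeries π hq), subst_C,
    ← C_apply, ← hD, ← hD, piSeries]
  ring

theorem decomp_X_pow_add_apply {r : ℕ} (hr : r + 1 < q) (i : Fin q) :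
    D (X ^ (r + q)) i = if (i : ℕ) = r then X else if (i : ℕ) = r + 1 then -C π else 0 := by
  rw [decomp_X_pow_add hinj hD (by omega), decomp_X_pow_of_lt hinj hD (by omega),
    decomp_X_pow_of_lt hinj hD hr]
  simp only [Pi.sub_apply, Pi.smul_apply, Pi.single_apply, Fin.ext_iff]
  split_ifs <;> first | omega | simp

end Decomposition

section Psi

variable {π : R} {q : ℕ} {D : R⟦X⟧ → Fin q → R⟦X⟧} {ψ : R⟦X⟧ → R⟦X⟧}
  (hinj : Function.Injective (phiSum π q)) (hD : ∀ f, f = phiSum π q (D f))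
  (hψ : ∀ f, C π * ψ f = ∑ i : Fin q, D (X ^ (i : ℕ) * f) i)
include hinj hD hψ

theorem C_mul_psi_one : C π * ψ 1 = C (q : R) := by
  simp [hψ, decomp_X_pow_of_lt hinj hD]

theorem psi_X_pow_eq_zero [IsDomain R] (hπ : π ≠ 0) {j : ℕ} (hj1 : 1 ≤ j)
    (hj : j ≤ q - 2) :
    ψ (X ^ j) = 0 := by
  refine mul_left_cancel₀ ((map_ne_zero_iff _ C_injective).mpr hπ) ?_
  rw [hψ, mul_zero]
  refine sum_eq_zero fun i _ => ?_
  rw [← pow_add]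
  by_cases hlt : (i : ℕ) + j < q
  · rw [decomp_X_pow_of_lt hinj hD hlt, Pi.single_apply, if_neg (by simp [Fin.ext_iff]; omega)]
  · rw [show (i : ℕ) + j = ((i : ℕ) + j - q) + q by omega,
      decomp_X_pow_add_apply hinj hD (by omega), if_neg (by omega), if_neg (by omega)]

theorem psi_X_pow_sub_one [IsDomain R] (hπ : π ≠ 0) (hq : 2 ≤ q) :
    ψ (X ^ (q - 1)) = C (1 - (q : R)) := by
  refine mul_left_cancel₀ ((map_ne_zero_iff _ C_injective).mpr hπ) ?_
  obtain ⟨q, rfl⟩ : ∃ r, q = r + 1 := ⟨q - 1, by omega⟩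
  have hcorner : D (X ^ q) 0 = 0 := by
    rw [decomp_X_pow_of_lt hinj hD (Nat.lt_succ_self q), Pi.single_apply,
      if_neg (by simp [Fin.ext_iff]; omega)]
  have hdiag (i : Fin q) : D (X ^ ((i.succ : ℕ) + q)) i.succ = -C π := by
    rw [Fin.val_succ, show (i : ℕ) + 1 + q = i + (q + 1) by omega,
      decomp_X_pow_add_apply hinj hD (by omega), if_neg (by simp), if_pos (by simp)]
  rw [hψ, Fin.sum_univ_succ]
  simp only [← pow_add, Nat.add_sub_cancel, Fin.val_zero, zero_add, hcorner, hdiag, sum_const,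
    card_univ, Fintype.card_fin, nsmul_eq_mul, map_sub, map_one, map_natCast]
  push_cast
  ring

theorem psi_X_pow_of_le [IsDomain R] (hπ : π ≠ 0) {j : ℕ} (hj : q ≤ j) :
    ψ (X ^ j) = X * ψ (X ^ (j - q)) - C π * ψ (X ^ (j - q + 1)) := by
  refine mul_left_cancel₀ ((map_ne_zero_iff _ C_injective).mpr hπ) ?_
  have hdiag (i : Fin q) : D (X ^ (i : ℕ) * X ^ j) i =
      X * D (X ^ (i : ℕ) * X ^ (j - q)) i - C π * D (X ^ (i : ℕ) * X ^ (j - q + 1)) i := by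
    rw [← pow_add, ← pow_add, ← pow_add, show (i : ℕ) + j = (i + (j - q)) + q by omega,
      decomp_X_pow_add hinj hD (ne_zero_of_decomp hD), ← add_assoc]
    rfl
  rw [hψ, mul_sub, mul_left_comm, mul_left_comm (C π), hψ, hψ, mul_sum, mul_sum,
    ← sum_sub_distrib]
  exact sum_congr rfl fun i _ => hdiag i

end Psi

end LubinTate

end

open LubinTate

/-- Formulas for `ψ` on `o_F[[X]]` for the coordinate with `[π](X) = πX + X^q`:
`ψ(1) = q/π`, `ψ(X^i) = 0` for `1 ≤ i ≤ q-2`, `ψ(X^(q-1)) = 1-q`, and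
`ψ(X^i) = X·ψ(X^(i-q)) - π·ψ(X^(i-q+1))` for `i ≥ q`. -/
theorem stmt3 (p : ℕ) [Fact p.Prime] (F : Type*) [Field F] [Algebra ℚ_[p] F]
    [FiniteDimensional ℚ_[p] F] [Algebra ℤ_[p] F] [IsScalarTower ℤ_[p] ℚ_[p] F]
    (O : Subalgebra ℤ_[p] F) (hO : O = integralClosure ℤ_[p] F)
    (π : ↥O) (hπ : Irreducible π) (q : ℕ)
    (hq : Nat.card (↥O ⧸ Ideal.span {π}) = q)
    -- `D f` is the (unique) decomposition of `f` in the basis `1, X, ..., X^(q-1)` of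
    -- `↥O⟦X⟧` over `φ(↥O⟦X⟧)`, where `φ(h) = h(PowerSeries.C ↥O π * PowerSeries.X + PowerSeries.X ^ q)`:
    (D : PowerSeries ↥O → Fin q → PowerSeries ↥O)
    (hD : ∀ f : PowerSeries ↥O,
      f = ∑ i : Fin q, PowerSeries.X ^ (i : ℕ) * PSComp (D f i) (PowerSeries.C π * PowerSeries.X + PowerSeries.X ^ q))
    -- `ψ` is characterized by `φ(ψ(f)) = (1/π)·Tr(f)`, i.e. `π·ψ(f)` is the sum of the
    -- diagonal entries of the matrix of multiplication by `f` in the above basis: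
    (ψ : PowerSeries ↥O → PowerSeries ↥O)
    (hψ : ∀ f : PowerSeries ↥O,
      PowerSeries.C (π) * ψ f = ∑ i : Fin q, D (PowerSeries.X ^ (i : ℕ) * f) i) :
    PowerSeries.C π * ψ 1 = PowerSeries.C ((q : ℕ) : ↥O) ∧
    (∀ i : ℕ, 1 ≤ i → i ≤ q - 2 → ψ (PowerSeries.X ^ i) = 0) ∧
    ψ (PowerSeries.X ^ (q - 1)) = PowerSeries.C (1 - ((q : ℕ) : ↥O)) ∧
    (∀ i : ℕ, q ≤ i → ψ (PowerSeries.X ^ i) =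
      PowerSeries.X * ψ (PowerSeries.X ^ (i - q)) -
        PowerSeries.C π * ψ (PowerSeries.X ^ (i - q + 1))) := by
  subst hO
  have hq0 : q ≠ 0 := by
    rintro rfl
    simpa using hD 1
  have hq1 : q ≠ 1 := by
    rintro rfl
    have hsub := (Nat.card_eq_one_iff_unique.mp hq).1
    exact hπ.not_isUnit (Ideal.span_singleton_eq_top.mp (Ideal.Quotient.subsingleton_iff.mp hsub))
  have : IsNoetherianRing (integralClosure ℤ_[p] F) :=
    integralClosure.isNoetherianRing (K := ℚ_[p]) (L := F)
  have : IsHausdorff (Ideal.span {π}) (integralClosure ℤ_[p] F) :=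
    .of_isDomain _ fun h => hπ.not_isUnit (Ideal.span_singleton_eq_top.mp h)
  have hπ0 : π ≠ 0 := hπ.ne_zero
  have hinj := phiSum_injective hπ0 hq0
  have hD' (f : PowerSeries (integralClosure ℤ_[p] F)) : f = phiSum π q (D f) := by
    rw [phiSum, ← funext (PSComp_eq_subst (constantCoeff_piSeries π hq0))]
    exact hD f
  exact ⟨C_mul_psi_one hinj hD' hψ,
    fun _ hi1 hi => psi_X_pow_eq_zero hinj hD' hψ hπ0 hi1 hi,
    psi_X_pow_sub_one hinj hD' hψ hπ0 (by omega),
    fun _ hi => psi_X_pow_of_le hinj hD' hψ hπ0 hi⟩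
end

section
/- Let $F = \mathbf{Q}_{p^2}$ with $q = p^2$, uniformizer $p$, and Lubin--Tate group with $[p](X) = pX + X^q$. If $p$ is odd (so $q \neq 2$), then $\psi(X) = 0$, and consequently each polynomial $c_{1,q^k}$ (the coefficient of $X^{q^k}$ in $[a](X)$, as a polynomial in $a$) lies in $\operatorname{Pol}(o_F[[X]]^{\psi=0})$ for all $k \geq 0$. -/
/-!
`π ψ(X)` is the trace of multiplication by `X` on `O⟦X⟧`, free over `φ(O⟦X⟧)` with basis
`1, X, …, X^(q-1)`, where `φ(h) = h([π])` and `[π] = πX + X^q`. Multiplication by `X` sends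
`X^i` to the basis vector `X^(i+1)` for `i + 1 < q`, and `X^q = φ(X) - πX` has components only
at `1` and `X`; as `q ≥ 3`, all diagonal entries vanish, so `ψ(X) = 0`, and then `c_(1,n)` is
itself one of the generators of `Pol(O⟦X⟧^(ψ=0))`.

The decomposition is unique: modulo `π`, `φ` becomes `X^q`, so a relation
`∑ X^i g_i(φ) = 0` puts all coefficients of the `g_i` in `(π)`; dividing by `π` and repeating
puts them in `⋂ (π)^k`, which is `0` by Krull's intersection theorem.
-/

open PowerSeries

/-- Evaluation `A(u,v)` of a two-variable power series `A ∈ R[[X,Y]] = (R[[X]])[[Y]]`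
at `u, v` with zero constant term. -/
noncomputable def PSEval2 {R : Type*} [CommRing R] (A : PowerSeries (PowerSeries R))
    (u v : PowerSeries R) : PowerSeries R :=
  PowerSeries.mk fun m => ∑ j ∈ Finset.range (m + 1),
    PowerSeries.coeff m (PSComp (PowerSeries.coeff j A) u * v ^ j)

/-- A Lubin--Tate formal group over `O` attached to the uniformizer `π`, with residue
cardinality `q`: the addition law `add ∈ O[[X,Y]]`, the endomorphisms `[a](X)` for
`a ∈ O`, normalized so that `[a](X) = aX + O(X^2)`, compatible with the ring structure
of `O`, and such that `[π](X) ≡ X^q mod π`. -/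
structure LubinTate (O : Type*) [CommRing O] (π : O) (q : ℕ) where
  add : PowerSeries (PowerSeries O)
  endo : O → PowerSeries O
  endo_const : ∀ a, PowerSeries.constantCoeff (endo a) = 0
  endo_lin : ∀ a, PowerSeries.coeff 1 (endo a) = a
  endo_one : endo 1 = PowerSeries.X
  endo_mul : ∀ a b, endo (a * b) = PSComp (endo a) (endo b)
  endo_add : ∀ a b, endo (a + b) = PSEval2 add (endo a) (endo b)
  add_X_zero : PSEval2 add PowerSeries.X 0 = PowerSeries.X
  add_zero_X : PSEval2 add 0 PowerSeries.X = PowerSeries.X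
  endo_pi_frob : ∀ n : ℕ,
    PowerSeries.coeff n (endo π) - (if n = q then 1 else 0) ∈ Ideal.span {π}

section PSComp

variable {R : Type*} [CommRing R]

@[simp]
lemma coeff_PSComp (f g : R⟦X⟧) (m : ℕ) :
    coeff m (PSComp f g) = ∑ n ∈ Finset.range (m + 1), coeff m (C (coeff n f) * g ^ n) := by
  simp [PSComp]

lemma PSComp_add (f f' g : R⟦X⟧) : PSComp (f + f') g = PSComp f g + PSComp f' g := by
  ext m
  simp only [coeff_PSComp, map_add, ← Finset.sum_add_distrib, add_mul]

lemma PSComp_sub (f f' g : R⟦X⟧) : PSComp (f - f') g = PSComp f g - PSComp f' g :=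
  eq_sub_of_add_eq (by rw [← PSComp_add, sub_add_cancel])

lemma PSComp_C_mul (c : R) (f g : R⟦X⟧) : PSComp (C c * f) g = C c * PSComp f g := by
  ext m
  simp only [coeff_PSComp, coeff_C_mul, Finset.mul_sum, map_mul, mul_assoc]

lemma PSComp_C (c : R) (g : R⟦X⟧) : PSComp (C c) g = C c := by
  ext m
  rw [coeff_PSComp, Finset.sum_eq_single 0]
  · simp
  · intro n _ hn
    simp [coeff_C, hn]
  · simp

lemma PSComp_zero (g : R⟦X⟧) : PSComp 0 g = 0 := by
  simpa using PSComp_C 0 g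

lemma PSComp_one (g : R⟦X⟧) : PSComp 1 g = 1 := by
  simpa using PSComp_C 1 g

lemma PSComp_X {g : R⟦X⟧} (hg : constantCoeff g = 0) : PSComp X g = g := by
  ext m
  rw [coeff_PSComp]
  rcases Nat.eq_zero_or_pos m with rfl | hm
  · simp [hg]
  · rw [Finset.sum_eq_single 1]
    · simp
    · intro n _ hn
      simp [coeff_X, hn]
    · simp [hm]

lemma map_PSComp {S : Type*} [CommRing S] (ρ : R →+* S) (f g : R⟦X⟧) :
    map ρ (PSComp f g) = PSComp (map ρ f) (map ρ g) := by
  ext m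
  rw [coeff_map, coeff_PSComp, map_sum, coeff_PSComp]
  refine Finset.sum_congr rfl fun n _ => ?_
  rw [← coeff_map, map_mul, map_pow, map_C, coeff_map]

lemma coeff_X_pow_mul_PSComp_X_pow {q : ℕ} (i i' : Fin q) (n : ℕ) (g : R⟦X⟧) :
    coeff (i + q * n) (X ^ (i' : ℕ) * PSComp g (X ^ q)) = if i' = i then coeff n g else 0 := by
  have hq : 0 < q := i.pos
  have key : ∀ n', (i' : ℕ) + q * n' = i + q * n → i' = i := fun n' h => Fin.ext <| by
    simpa [Nat.mod_eq_of_lt i.2, Nat.mod_eq_of_lt i'.2] using congrArg (· % q) h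
  rw [coeff_X_pow_mul']
  split_ifs with hle hi hi
  · subst hi
    rw [coeff_PSComp, Nat.add_sub_cancel_left, Finset.sum_eq_single n]
    · rw [← pow_mul, coeff_C_mul_X_pow, if_pos rfl]
    · intro n' _ hn'
      rw [← pow_mul, coeff_C_mul_X_pow, if_neg (by rw [Nat.mul_left_cancel_iff hq]; omega)]
    · intro h
      exact absurd (Finset.mem_range.2 (by nlinarith)) h
  · rw [coeff_PSComp]
    refine Finset.sum_eq_zero fun n' _ => ?_
    rw [← pow_mul, coeff_C_mul_X_pow, if_neg fun h => hi (key n' (by omega))]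
  · exact absurd (by rw [hi]; omega) hle
  · rfl

end PSComp

noncomputable def sumXPowMulPSComp {R : Type*} [CommRing R] {q : ℕ} (φ : R⟦X⟧)
    (g : Fin q → R⟦X⟧) : R⟦X⟧ :=
  ∑ i : Fin q, X ^ (i : ℕ) * PSComp (g i) φ

section sumXPowMulPSComp

variable {R : Type*} [CommRing R] {q : ℕ}

lemma sumXPowMulPSComp_add (φ : R⟦X⟧) (g g' : Fin q → R⟦X⟧) :
    sumXPowMulPSComp φ (g + g') = sumXPowMulPSComp φ g + sumXPowMulPSComp φ g' := by
  simp only [sumXPowMulPSComp, Pi.add_apply, PSComp_add, mul_add, Finset.sum_add_distrib]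

lemma sumXPowMulPSComp_sub (φ : R⟦X⟧) (g g' : Fin q → R⟦X⟧) :
    sumXPowMulPSComp φ (g - g') = sumXPowMulPSComp φ g - sumXPowMulPSComp φ g' := by
  simp only [sumXPowMulPSComp, Pi.sub_apply, PSComp_sub, mul_sub, Finset.sum_sub_distrib]

lemma sumXPowMulPSComp_C_mul (φ : R⟦X⟧) (c : R) (g : Fin q → R⟦X⟧) :
    sumXPowMulPSComp φ (fun i => C c * g i) = C c * sumXPowMulPSComp φ g := by
  simp only [sumXPowMulPSComp, PSComp_C_mul, Finset.mul_sum, mul_left_comm]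

lemma sumXPowMulPSComp_single (φ : R⟦X⟧) (j : Fin q) (f : R⟦X⟧) :
    sumXPowMulPSComp φ (Pi.single j f) = X ^ (j : ℕ) * PSComp f φ := by
  rw [sumXPowMulPSComp, Finset.sum_eq_single j]
  · rw [Pi.single_eq_same]
  · intro i _ hi
    rw [Pi.single_eq_of_ne hi, PSComp_zero, mul_zero]
  · simp

lemma map_sumXPowMulPSComp {S : Type*} [CommRing S] (ρ : R →+* S) (φ : R⟦X⟧)
    (g : Fin q → R⟦X⟧) :
    map ρ (sumXPowMulPSComp φ g) = sumXPowMulPSComp (map ρ φ) (fun i => map ρ (g i)) := by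
  simp only [sumXPowMulPSComp, map_sum, map_mul, map_pow, map_X, map_PSComp]

lemma coeff_sumXPowMulPSComp_X_pow (g : Fin q → R⟦X⟧) (i : Fin q) (n : ℕ) :
    coeff (i + q * n) (sumXPowMulPSComp (X ^ q) g) = coeff n (g i) := by
  simp only [sumXPowMulPSComp, map_sum, coeff_X_pow_mul_PSComp_X_pow, Finset.sum_ite_eq',
    Finset.mem_univ, if_true]

lemma coeff_mem_span_of_sumXPowMulPSComp_eq_zero (π : R) {g : Fin q → R⟦X⟧}
    (h : sumXPowMulPSComp (C π * X + X ^ q) g = 0) (i : Fin q) (n : ℕ) :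
    coeff n (g i) ∈ Ideal.span {π} := by
  set ρ := Ideal.Quotient.mk (Ideal.span {π})
  have hρπ : ρ π = 0 := Ideal.Quotient.eq_zero_iff_mem.2 (Ideal.mem_span_singleton_self π)
  have hφ : map ρ (C π * X + X ^ q) = X ^ q := by simp [hρπ]
  have hρ := congrArg (coeff (i + q * n)) (congrArg (map ρ) h)
  rw [map_sumXPowMulPSComp, hφ, coeff_sumXPowMulPSComp_X_pow, coeff_map, map_zero,
    map_zero] at hρ
  exact Ideal.Quotient.eq_zero_iff_mem.1 hρ

lemma exists_eq_C_mul_of_coeff_mem_span {π : R} {f : R⟦X⟧}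
    (hf : ∀ n, coeff n f ∈ Ideal.span {π}) : ∃ h : R⟦X⟧, f = C π * h := by
  choose c hc using fun n => Ideal.mem_span_singleton'.1 (hf n)
  exact ⟨mk c, by ext n; rw [coeff_C_mul, coeff_mk, ← hc, mul_comm]⟩

lemma coeff_mem_span_pow_of_sumXPowMulPSComp_eq_zero [IsDomain R] {π : R} (hπ : π ≠ 0)
    (k : ℕ) {g : Fin q → R⟦X⟧} (h : sumXPowMulPSComp (C π * X + X ^ q) g = 0) (i : Fin q)
    (n : ℕ) : coeff n (g i) ∈ Ideal.span {π} ^ k := by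
  induction k generalizing g with
  | zero => simp
  | succ k ih =>
    choose g' hg' using fun i =>
      exists_eq_C_mul_of_coeff_mem_span (coeff_mem_span_of_sumXPowMulPSComp_eq_zero π h i)
    have h' : sumXPowMulPSComp (C π * X + X ^ q) g' = 0 := by
      have hCπ : (C π : R⟦X⟧) ≠ 0 := (map_ne_zero_iff _ C_injective).2 hπ
      rw [show g = fun i => C π * g' i from funext hg', sumXPowMulPSComp_C_mul] at h
      exact (mul_eq_zero.1 h).resolve_left hCπ
    rw [hg', coeff_C_mul, pow_succ, mul_comm π]
    exact Ideal.mul_mem_mul (ih h') (Ideal.mem_span_singleton_self π)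

lemma sumXPowMulPSComp_injective [IsDomain R] [IsNoetherianRing R] {π : R} (hπ : π ≠ 0)
    (hπu : ¬IsUnit π) :
    Function.Injective (sumXPowMulPSComp (q := q) (C π * X + X ^ q)) := by
  intro g g' h
  have hbot : (⨅ k : ℕ, Ideal.span {π} ^ k) = ⊥ :=
    Ideal.iInf_pow_eq_bot_of_isDomain _ (mt Ideal.span_singleton_eq_top.1 hπu)
  have h0 : sumXPowMulPSComp (C π * X + X ^ q) (g - g') = 0 := by
    rw [sumXPowMulPSComp_sub, h, sub_self]
  funext i
  ext n
  have hmem : coeff n ((g - g') i) ∈ ⨅ k : ℕ, Ideal.span {π} ^ k :=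
    Ideal.mem_iInf.2 fun k => coeff_mem_span_pow_of_sumXPowMulPSComp_eq_zero hπ k h0 i n
  rwa [hbot, Ideal.mem_bot, Pi.sub_apply, map_sub, sub_eq_zero] at hmem

lemma apply_eq_zero_of_sumXPowMulPSComp_eq_X_pow_succ {π : R} (hq : 3 ≤ q)
    (hinj : Function.Injective (sumXPowMulPSComp (q := q) (C π * X + X ^ q)))
    {g : Fin q → R⟦X⟧} (i : Fin q)
    (hg : sumXPowMulPSComp (C π * X + X ^ q) g = X ^ ((i : ℕ) + 1)) : g i = 0 := by
  by_cases hi : (i : ℕ) + 1 < q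
  · have hsingle : g = Pi.single ⟨i + 1, hi⟩ 1 := hinj <| by
      rw [hg, sumXPowMulPSComp_single, PSComp_one, mul_one]
    rw [hsingle, Pi.single_eq_of_ne (by simp [Fin.ext_iff])]
  · have hφ : constantCoeff (C π * X + X ^ q : R⟦X⟧) = 0 := by
      simp [zero_pow (by omega : q ≠ 0)]
    have hpair : g = Pi.single (⟨0, by omega⟩ : Fin q) X + Pi.single ⟨1, by omega⟩ (-C π) := by
      apply hinj
      rw [hg, sumXPowMulPSComp_add, sumXPowMulPSComp_single, sumXPowMulPSComp_single,
        PSComp_X hφ, ← map_neg, PSComp_C, show (i : ℕ) + 1 = q by omega, map_neg]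
      ring
    rw [hpair, Pi.add_apply, Pi.single_eq_of_ne ?_, Pi.single_eq_of_ne ?_, add_zero]
    all_goals
      intro h
      simp only [Fin.ext_iff] at h
      omega

end sumXPowMulPSComp

theorem stmt14_general (p : ℕ) [Fact p.Prime] (F : Type*) [Field F] [Algebra ℚ_[p] F]
    [FiniteDimensional ℚ_[p] F] [Algebra ℤ_[p] F] [IsScalarTower ℤ_[p] ℚ_[p] F]
    (O : Subalgebra ℤ_[p] F) (hO : O = integralClosure ℤ_[p] F)
    (hπ : Irreducible ((p : ℕ) : ↥O)) (q : ℕ) (hq2 : q = p ^ 2)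
    (LT : LubinTate ↥O ((p : ℕ) : ↥O) q)
    (hcoord : LT.endo ((p : ℕ) : ↥O) =
      PowerSeries.C ((p : ℕ) : ↥O) * PowerSeries.X + PowerSeries.X ^ q)
    -- `D f` is the (unique) decomposition of `f` in the basis `1, X, ..., X^(q-1)` of
    -- `↥O⟦X⟧` over `φ(↥O⟦X⟧)`, where `φ(h) = h(LT.endo ((p : ℕ) : ↥O))`:
    (D : PowerSeries ↥O → Fin q → PowerSeries ↥O)
    (hD : ∀ f : PowerSeries ↥O,
      f = ∑ i : Fin q, PowerSeries.X ^ (i : ℕ) * PSComp (D f i) (LT.endo ((p : ℕ) : ↥O)))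
    -- `ψ` is characterized by `φ(ψ(f)) = (1/π)·Tr(f)`, i.e. `π·ψ(f)` is the sum of the
    -- diagonal entries of the matrix of multiplication by `f` in the above basis:
    (ψ : PowerSeries ↥O → PowerSeries ↥O)
    (hψ : ∀ f : PowerSeries ↥O,
      PowerSeries.C (((p : ℕ) : ↥O)) * ψ f = ∑ i : Fin q, D (PowerSeries.X ^ (i : ℕ) * f) i)
    (cpoly : PowerSeries ↥O → ℕ → Polynomial F) :
    ψ PowerSeries.X = 0 ∧
    ∀ k : ℕ, cpoly PowerSeries.X (q ^ k) ∈
      Submodule.span ↥O {c : Polynomial F | ∃ f : PowerSeries ↥O, ψ f = 0 ∧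
        ∃ n : ℕ, c = cpoly f n} := by
  have : IsNoetherianRing ↥O := by
    rw [hO]
    exact IsIntegralClosure.isNoetherianRing ℤ_[p] ℚ_[p] F _
  have hq3 : 3 ≤ q := by
    have := Nat.pow_le_pow_left (Fact.out : p.Prime).two_le 2
    omega
  have hinj := sumXPowMulPSComp_injective (q := q) hπ.ne_zero hπ.not_isUnit
  rw [hcoord] at hD
  have hψX : ψ X = 0 := by
    have hdiag := hψ X
    rw [Finset.sum_eq_zero fun i _ => ?_] at hdiag
    · exact (mul_eq_zero.1 hdiag).resolve_left ((map_ne_zero_iff _ C_injective).2 hπ.ne_zero)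
    · rw [← pow_succ]
      exact apply_eq_zero_of_sumXPowMulPSComp_eq_X_pow_succ hq3 hinj i (hD _).symm
  exact ⟨hψX, fun k => Submodule.subset_span ⟨X, hψX, q ^ k, rfl⟩⟩

/-- For `F = ℚ_(p²)` with `p` odd, `q = p²`, `[p](X) = pX + X^q`: `ψ(X) = 0`, and each
`c_(1,q^k)` lies in `Pol(o_F[[X]]^(ψ=0))`. -/
theorem stmt14 (p : ℕ) [Fact p.Prime] (F : Type*) [Field F] [Algebra ℚ_[p] F]
    [FiniteDimensional ℚ_[p] F] [Algebra ℤ_[p] F] [IsScalarTower ℤ_[p] ℚ_[p] F]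
    (O : Subalgebra ℤ_[p] F) (hO : O = integralClosure ℤ_[p] F)
    (hp2 : p ≠ 2) (hd : Module.finrank ℚ_[p] F = 2)
    (hπ : Irreducible ((p : ℕ) : ↥O)) (q : ℕ) (hq2 : q = p ^ 2)
    (hq : Nat.card (↥O ⧸ Ideal.span {((p : ℕ) : ↥O)}) = q)
    (LT : LubinTate ↥O ((p : ℕ) : ↥O) q)
    (hcoord : LT.endo ((p : ℕ) : ↥O) =
      PowerSeries.C ((p : ℕ) : ↥O) * PowerSeries.X + PowerSeries.X ^ q)
    -- `D f` is the (unique) decomposition of `f` in the basis `1, X, ..., X^(q-1)` of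
    -- `↥O⟦X⟧` over `φ(↥O⟦X⟧)`, where `φ(h) = h(LT.endo ((p : ℕ) : ↥O))`:
    (D : PowerSeries ↥O → Fin q → PowerSeries ↥O)
    (hD : ∀ f : PowerSeries ↥O,
      f = ∑ i : Fin q, PowerSeries.X ^ (i : ℕ) * PSComp (D f i) (LT.endo ((p : ℕ) : ↥O)))
    -- `ψ` is characterized by `φ(ψ(f)) = (1/π)·Tr(f)`, i.e. `π·ψ(f)` is the sum of the
    -- diagonal entries of the matrix of multiplication by `f` in the above basis:
    (ψ : PowerSeries ↥O → PowerSeries ↥O)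
    (hψ : ∀ f : PowerSeries ↥O,
      PowerSeries.C (((p : ℕ) : ↥O)) * ψ f = ∑ i : Fin q, D (PowerSeries.X ^ (i : ℕ) * f) i)
    -- `cpoly f n` is the integer-valued polynomial `c_{f,n} ∈ F[T]` with
    -- `f([a](X)) = ∑ n, c_{f,n}(a) X^n`:
    (cpoly : PowerSeries ↥O → ℕ → Polynomial F)
    (hcpoly : ∀ (f : PowerSeries ↥O) (n : ℕ) (a : ↥O),
      Polynomial.eval (algebraMap ↥O F a) (cpoly f n) =
        algebraMap ↥O F (PowerSeries.coeff n (PSComp f (LT.endo a)))) :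
    ψ PowerSeries.X = 0 ∧
    ∀ k : ℕ, cpoly PowerSeries.X (q ^ k) ∈
      Submodule.span ↥O {c : Polynomial F | ∃ f : PowerSeries ↥O, ψ f = 0 ∧
        ∃ n : ℕ, c = cpoly f n} :=
  stmt14_general p F O hO hπ q hq2 LT hcoord D hD ψ hψ cpoly
end
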